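/- arXiv:1204.2320 — 3 statements merged into one kernel-verified Lean document; each statement's English description precedes it below -/
import Mathlib

section
/- In any optimal solution of the geographical load balancing linear program with strictly positive migration cost coefficients, all migration variables are zero. Formally: if b_{i,j} > 0 for all pairs (i,j), and z achieves the minimum of the objective sum over t,i of C_{i,t}(y_{i,t}) plus sum over t,i,j of b_{i,j} z_{i,j,t} subject to the feasibility constraints, then z_{i,j,d,t} = 0 for all i,j,d,t. -/
/-!
If some migration `Z = z i j d t` were positive, cancel it and move `Z` units of the workload
that `i` is assigned for execution at time `s = t + d` from `i` to `j`. Executed loads, hence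
energy costs, are unchanged, while the migration cost drops by `b i j * Z > 0`, contradicting
optimality.

The delicate point is the migration constraint at `i`, which for each execution time bounds
every tail (in the deadline offset) of the out-migrations by the same tail of the assignments.
The `Z` units are taken greedily from the latest releases, i.e. from offsets `d, d + 1, …`.
Tails starting at or below `d` then lose `Z` on both sides. A tail starting at `m > d` loses
no migration and loses `Z - min P Z` of assignment, `P` being the assignment at offsets in
`[d, m)`: nothing if `P ≥ Z`, and otherwise its bound follows from the tail starting at `d`,
which contains the cancelled migration.
-/

open Finset

/-- Executed workload `y_{i,t}`: the assigned workload
`x_{i,t} = ∑_d x_{i,d,t-d}` plus net migrated-in workload (equation (1)). -/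
noncomputable def execLoad (n D : ℕ) (x : Fin n → ℕ → ℤ → ℝ)
    (z : Fin n → Fin n → ℕ → ℤ → ℝ) (i : Fin n) (t : ℤ) : ℝ :=
  (∑ d ∈ Finset.range (D + 1), x i d (t - d))
    + (∑ j : Fin n, ∑ d ∈ Finset.range (D + 1), z j i d (t - d))
    - (∑ j : Fin n, ∑ d ∈ Finset.range (D + 1), z i j d (t - d))

/-- Feasibility for the geographical load balancing LP (optimization (2)):
nonnegativity, the total assignment at each slot `1 ≤ t ≤ T` equals the
released workload `L_t`, migration is bounded by assignment (constraint
(2c)), and capacity `y_{i,t} ≤ M_i`. -/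
def GLBFeasible (n T D : ℕ) (L : ℤ → ℝ) (M : Fin n → ℝ)
    (x : Fin n → ℕ → ℤ → ℝ) (z : Fin n → Fin n → ℕ → ℤ → ℝ) : Prop :=
  (∀ i d t, 0 ≤ x i d t) ∧
  (∀ i j d t, 0 ≤ z i j d t) ∧
  (∀ t : ℤ, 1 ≤ t → t ≤ T →
    ∑ i : Fin n, ∑ d ∈ Finset.range (D + 1), x i d t = L t) ∧
  (∀ i : Fin n, ∀ d ∈ Finset.range (D + 1), ∀ t : ℤ,
    ∑ k ∈ Finset.range (D - d + 1), ∑ j : Fin n, z i j (d + k) (t - k)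
      ≤ ∑ k ∈ Finset.range (D - d + 1), x i (d + k) (t - k)) ∧
  (∀ i t, execLoad n D x z i t ≤ M i)

/-- Objective of the geographical load balancing LP: total energy cost plus
total migration cost over the horizon `1 ≤ t ≤ T`. -/
noncomputable def GLBObj (n T D : ℕ) (C : Fin n → ℤ → ℝ → ℝ)
    (b : Fin n → Fin n → ℝ) (x : Fin n → ℕ → ℤ → ℝ)
    (z : Fin n → Fin n → ℕ → ℤ → ℝ) : ℝ :=
  ∑ t ∈ Finset.Icc (1 : ℤ) T,
    ((∑ i : Fin n, C i t (execLoad n D x z i t))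
      + ∑ i : Fin n, ∑ j : Fin n,
          b i j * ∑ d ∈ Finset.range (D + 1), z i j d t)

-- The amount taken from `x u` when a total of `Z` is collected greedily from `x d, x (d + 1), …`.
noncomputable def greedyTake (x : ℕ → ℝ) (d : ℕ) (Z : ℝ) (u : ℕ) : ℝ :=
  min (∑ v ∈ Ico d (u + 1), x v) Z - min (∑ v ∈ Ico d u, x v) Z

section Greedy

variable {x : ℕ → ℝ} {d : ℕ} {Z : ℝ}

lemma greedyTake_nonneg (hx : ∀ u, 0 ≤ x u) (u : ℕ) : 0 ≤ greedyTake x d Z u :=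
  sub_nonneg.2 <| min_le_min_right _ <|
    sum_le_sum_of_subset_of_nonneg (Ico_subset_Ico_right u.le_succ) fun v _ _ => hx v

lemma greedyTake_le (hx : ∀ u, 0 ≤ x u) (u : ℕ) : greedyTake x d Z u ≤ x u := by
  rcases lt_or_ge u d with hu | hu
  · simpa [greedyTake, Ico_eq_empty_of_le hu.le, Ico_eq_empty_of_le (Nat.succ_le_of_lt hu)]
      using hx u
  · rw [greedyTake, sum_Ico_succ_top hu, sub_le_iff_le_add', ← min_add_add_right]
    exact min_le_min_left _ (le_add_of_nonneg_right (hx u))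

lemma sum_Ico_greedyTake {m k : ℕ} (hmk : m ≤ k) :
    ∑ u ∈ Ico m k, greedyTake x d Z u
      = min (∑ v ∈ Ico d k, x v) Z - min (∑ v ∈ Ico d m, x v) Z :=
  sum_Ico_sub (fun u => min (∑ v ∈ Ico d u, x v) Z) hmk

lemma tail_sub_le_tail_sub_sum_greedyTake {a : ℕ → ℝ} {N m : ℕ} (ha : ∀ u, 0 ≤ a u)
    (hZ0 : 0 ≤ Z) (hZ : Z ≤ a d) (hdN : d ≤ N) (hmN : m ≤ N)
    (htail : ∀ m ≤ N, ∑ u ∈ Ico m (N + 1), a u ≤ ∑ u ∈ Ico m (N + 1), x u) :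
    ∑ u ∈ Ico m (N + 1), a u - (if m ≤ d then Z else 0)
      ≤ ∑ u ∈ Ico m (N + 1), x u - ∑ u ∈ Ico m (N + 1), greedyTake x d Z u := by
  have had : a d ≤ ∑ u ∈ Ico d (N + 1), a u :=
    single_le_sum (fun u _ => ha u) (mem_Ico.2 ⟨le_rfl, by omega⟩)
  have hZx : min (∑ v ∈ Ico d (N + 1), x v) Z = Z :=
    min_eq_right (hZ.trans (had.trans (htail d hdN)))
  rw [sum_Ico_greedyTake (by omega), hZx]
  have hm := htail m hmN
  split_ifs with hmd
  · rw [Ico_eq_empty_of_le hmd, sum_empty, min_eq_left hZ0]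
    linarith
  · have hd := htail d hdN
    have hsplit_x := sum_Ico_consecutive x (show d ≤ m by omega) (show m ≤ N + 1 by omega)
    have hsplit_a := sum_Ico_consecutive a (show d ≤ m by omega) (show m ≤ N + 1 by omega)
    have hda : a d ≤ ∑ u ∈ Ico d m, a u :=
      single_le_sum (fun u _ => ha u) (mem_Ico.2 ⟨le_rfl, by omega⟩)
    rcases min_cases (∑ v ∈ Ico d m, x v) Z with ⟨h, -⟩ | ⟨h, -⟩ <;> rw [h] <;> linarith

end Greedy

lemma sum_range_antidiagonal_eq_sum_Ico (f : ℕ → ℤ → ℝ) {d D : ℕ} (hd : d ≤ D) (t : ℤ) :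
    ∑ k ∈ range (D - d + 1), f (d + k) (t - k) = ∑ u ∈ Ico d (D + 1), f u (t + d - u) := by
  rw [sum_Ico_eq_sum_range, show D + 1 - d = D - d + 1 by omega]
  refine sum_congr rfl fun k _ => ?_
  congr 1
  push_cast
  ring

lemma eq_and_sub_eq_iff_eq_and_eq_add {u d : ℕ} {s t : ℤ} :
    (u = d ∧ s - u = t) ↔ (u = d ∧ s = t + d) := by
  constructor <;> rintro ⟨rfl, h⟩ <;> exact ⟨rfl, by omega⟩

def singleMigration {n : ℕ} (i j : Fin n) (d : ℕ) (t : ℤ) (Z : ℝ) :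
    Fin n → Fin n → ℕ → ℤ → ℝ :=
  fun i' j' d' t' => if i' = i ∧ j' = j ∧ d' = d ∧ t' = t then Z else 0

def transfer {n : ℕ} (i j : Fin n) (δ : ℕ → ℤ → ℝ) : Fin n → ℕ → ℤ → ℝ :=
  Pi.single j δ - Pi.single i δ

-- `reroutedAssignment x i s d Z u r`: the assignment released at `r` with offset `u` that is
-- moved away from `i`; it is nonzero only for execution time `r + u = s`.
noncomputable def reroutedAssignment {n : ℕ} (x : Fin n → ℕ → ℤ → ℝ) (i : Fin n) (s : ℤ)
    (d : ℕ) (Z : ℝ) : ℕ → ℤ → ℝ :=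
  fun u r => if r + u = s then greedyTake (fun v => x i v (s - v)) d Z u else 0

section Reroute

variable {n D T : ℕ} {L : ℤ → ℝ} {M : Fin n → ℝ} {i j : Fin n} {d : ℕ} {t s : ℤ} {Z : ℝ}
  {x : Fin n → ℕ → ℤ → ℝ} {z : Fin n → Fin n → ℕ → ℤ → ℝ}

lemma sum_singleMigration_in (hd : d ≤ D) (i' : Fin n) (s : ℤ) :
    ∑ j', ∑ u ∈ range (D + 1), singleMigration i j d t Z j' i' u (s - u)
      = if i' = j ∧ s = t + d then Z else 0 := by
  simp only [singleMigration, eq_and_sub_eq_iff_eq_and_eq_add]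
  simp [ite_and, sum_ite_eq', Nat.lt_succ_iff.2 hd]

lemma sum_singleMigration_out (hd : d ≤ D) (i' : Fin n) (s : ℤ) :
    ∑ j', ∑ u ∈ range (D + 1), singleMigration i j d t Z i' j' u (s - u)
      = if i' = i ∧ s = t + d then Z else 0 := by
  simp only [singleMigration, eq_and_sub_eq_iff_eq_and_eq_add]
  simp [ite_and, sum_ite_eq', Nat.lt_succ_iff.2 hd]

lemma sum_Ico_singleMigration (hd : d ≤ D) (i' : Fin n) (d' : ℕ) (s : ℤ) :
    ∑ u ∈ Ico d' (D + 1), ∑ j', singleMigration i j d t Z i' j' u (s - u)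
      = if i' = i ∧ d' ≤ d ∧ s = t + d then Z else 0 := by
  simp only [singleMigration, eq_and_sub_eq_iff_eq_and_eq_add]
  simp [ite_and, sum_ite_eq', Nat.lt_succ_iff.2 hd]

lemma sum_singleMigration_cost (hd : d ≤ D) (ht : t ∈ Icc (1 : ℤ) T)
    (b : Fin n → Fin n → ℝ) :
    ∑ t' ∈ Icc (1 : ℤ) T, ∑ i', ∑ j',
        b i' j' * ∑ u ∈ range (D + 1), singleMigration i j d t Z i' j' u t'
      = b i j * Z := by
  simp [singleMigration, ite_and, sum_ite_eq', Nat.lt_succ_iff.2 hd, ht]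

lemma transfer_apply (δ : ℕ → ℤ → ℝ) (i' : Fin n) (u : ℕ) (r : ℤ) :
    transfer i j δ i' u r = (if i' = j then δ u r else 0) - (if i' = i then δ u r else 0) := by
  simp only [transfer, Pi.sub_apply, Pi.single_apply]
  split_ifs <;> rfl

lemma sum_transfer (δ : ℕ → ℤ → ℝ) (i' : Fin n) {ι : Type*} (S : Finset ι) (f : ι → ℕ)
    (g : ι → ℤ) :
    ∑ k ∈ S, transfer i j δ i' (f k) (g k)
      = (if i' = j then ∑ k ∈ S, δ (f k) (g k) else 0)
        - (if i' = i then ∑ k ∈ S, δ (f k) (g k) else 0) := by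
  simp only [transfer_apply, sum_sub_distrib, ite_sum_zero]

lemma execLoad_add_sub (x₁ : Fin n → ℕ → ℤ → ℝ) (z₁ : Fin n → Fin n → ℕ → ℤ → ℝ)
    (i' : Fin n) (s : ℤ) :
    execLoad n D (x + x₁) (z - z₁) i' s
      = execLoad n D x z i' s + ∑ u ∈ range (D + 1), x₁ i' u (s - u)
        - ∑ j', ∑ u ∈ range (D + 1), z₁ j' i' u (s - u)
        + ∑ j', ∑ u ∈ range (D + 1), z₁ i' j' u (s - u) := by
  simp only [execLoad, Pi.add_apply, Pi.sub_apply, sum_add_distrib, sum_sub_distrib]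
  ring

lemma execLoad_transfer_sub_singleMigration {δ : ℕ → ℤ → ℝ} (hd : d ≤ D)
    (hδ : ∀ s, ∑ u ∈ range (D + 1), δ u (s - u) = if s = t + d then Z else 0)
    (i' : Fin n) (s : ℤ) :
    execLoad n D (x + transfer i j δ) (z - singleMigration i j d t Z) i' s
      = execLoad n D x z i' s := by
  rw [execLoad_add_sub, sum_transfer δ i' _ (fun u => u) (fun u => s - u), hδ,
    sum_singleMigration_in hd, sum_singleMigration_out hd]
  by_cases hs : s = t + d
  · simp only [hs, and_true, ↓reduceIte]
    ring
  · simp [hs]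

lemma GLBObj_transfer_sub_singleMigration {δ : ℕ → ℤ → ℝ} (hd : d ≤ D)
    (ht : t ∈ Icc (1 : ℤ) T)
    (hδ : ∀ s, ∑ u ∈ range (D + 1), δ u (s - u) = if s = t + d then Z else 0)
    (C : Fin n → ℤ → ℝ → ℝ) (b : Fin n → Fin n → ℝ) :
    GLBObj n T D C b (x + transfer i j δ) (z - singleMigration i j d t Z)
      = GLBObj n T D C b x z - b i j * Z := by
  rw [GLBObj, GLBObj, ← sum_singleMigration_cost hd ht b, ← sum_sub_distrib]
  refine sum_congr rfl fun t' _ => ?_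
  simp only [execLoad_transfer_sub_singleMigration hd hδ, Pi.sub_apply, sum_sub_distrib, mul_sub]
  ring

lemma migration_constraint_iff_tail :
    (∀ i : Fin n, ∀ d ∈ range (D + 1), ∀ t : ℤ,
      ∑ k ∈ range (D - d + 1), ∑ j : Fin n, z i j (d + k) (t - k)
        ≤ ∑ k ∈ range (D - d + 1), x i (d + k) (t - k))
    ↔ ∀ i : Fin n, ∀ d ≤ D, ∀ s : ℤ,
      ∑ u ∈ Ico d (D + 1), ∑ j, z i j u (s - u) ≤ ∑ u ∈ Ico d (D + 1), x i u (s - u) := by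
  refine forall_congr' fun i => ⟨fun h d hd s => ?_, fun h d hd t => ?_⟩
  · have := h d (mem_range.2 (by omega)) (s - d)
    simp only [sum_range_antidiagonal_eq_sum_Ico (fun u r => ∑ j, z i j u r) hd,
      sum_range_antidiagonal_eq_sum_Ico (x i) hd, sub_add_cancel] at this
    exact this
  · have hd : d ≤ D := Nat.lt_succ_iff.1 (mem_range.1 hd)
    simp only [sum_range_antidiagonal_eq_sum_Ico (fun u r => ∑ j, z i j u r) hd,
      sum_range_antidiagonal_eq_sum_Ico (x i) hd]
    exact h d hd (t + d)

lemma reroutedAssignment_nonneg (hx : ∀ i d t, 0 ≤ x i d t) (u : ℕ) (r : ℤ) :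
    0 ≤ reroutedAssignment x i s d Z u r := by
  unfold reroutedAssignment
  split_ifs
  exacts [greedyTake_nonneg (fun _ => hx _ _ _) u, le_rfl]

lemma reroutedAssignment_le (hx : ∀ i d t, 0 ≤ x i d t) (u : ℕ) (r : ℤ) :
    reroutedAssignment x i s d Z u r ≤ x i u r := by
  unfold reroutedAssignment
  split_ifs with h
  · obtain rfl : r = s - u := by omega
    exact greedyTake_le (fun _ => hx _ _ _) u
  · exact hx i u r

lemma sum_reroutedAssignment (S : Finset ℕ) (s' : ℤ) :
    ∑ u ∈ S, reroutedAssignment x i s d Z u (s' - u)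
      = if s' = s then ∑ u ∈ S, greedyTake (fun v => x i v (s - v)) d Z u else 0 := by
  simp only [reroutedAssignment, sub_add_cancel]
  exact (ite_sum_zero _ _ _).symm

lemma sum_range_reroutedAssignment (hZ0 : 0 ≤ Z)
    (hZ : Z ≤ ∑ u ∈ Ico d (D + 1), x i u (s - u)) (s' : ℤ) :
    ∑ u ∈ range (D + 1), reroutedAssignment x i s d Z u (s' - u) = if s' = s then Z else 0 := by
  rw [sum_reroutedAssignment, range_eq_Ico, sum_Ico_greedyTake (Nat.zero_le _),
    min_eq_right hZ, Ico_eq_empty_of_le (Nat.zero_le d), sum_empty, min_eq_left hZ0, sub_zero]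

lemma reroute_migration_tail_le (hx : ∀ i d t, 0 ≤ x i d t) (hz : ∀ i j d t, 0 ≤ z i j d t)
    (htail : ∀ i : Fin n, ∀ d ≤ D, ∀ s : ℤ,
      ∑ u ∈ Ico d (D + 1), ∑ j, z i j u (s - u) ≤ ∑ u ∈ Ico d (D + 1), x i u (s - u))
    (hd : d ≤ D) (i₀ : Fin n) (d₀ : ℕ) (hd₀ : d₀ ≤ D) (s₀ : ℤ) :
    ∑ u ∈ Ico d₀ (D + 1), ∑ j', (z - singleMigration i j d t (z i j d t)) i₀ j' u (s₀ - u)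
      ≤ ∑ u ∈ Ico d₀ (D + 1),
          (x + transfer i j (reroutedAssignment x i (t + d) d (z i j d t))) i₀ u (s₀ - u) := by
  simp only [Pi.sub_apply, Pi.add_apply, sum_sub_distrib, sum_add_distrib]
  rw [sum_Ico_singleMigration hd, sum_transfer _ i₀ _ (fun u => u) (fun u => s₀ - u),
    sum_reroutedAssignment]
  have hmoved : 0 ≤ ∑ u ∈ Ico d₀ (D + 1),
      greedyTake (fun v => x i v (t + d - v)) d (z i j d t) u :=
    sum_nonneg fun u _ => greedyTake_nonneg (fun _ => hx _ _ _) u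
  by_cases h : i₀ = i ∧ s₀ = t + d
  · obtain ⟨rfl, rfl⟩ := h
    have key := tail_sub_le_tail_sub_sum_greedyTake
      (a := fun u => ∑ j', z i₀ j' u (t + d - u)) (x := fun u => x i₀ u (t + d - u))
      (fun u => sum_nonneg fun j' _ => hz _ _ _ _) (hz _ _ _ _)
      (by simpa using single_le_sum (fun j' _ => hz i₀ j' d t) (mem_univ j))
      hd hd₀ (fun m hm => htail i₀ m hm (t + d))
    simp only [true_and, and_true, ↓reduceIte] at key ⊢
    split_ifs at key ⊢ <;> linarith
  · have := htail i₀ d₀ hd₀ s₀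
    split_ifs <;> first | linarith | tauto

lemma GLBFeasible.migration_le_sum_Ico (hfeas : GLBFeasible n T D L M x z) (hd : d ≤ D)
    (i j : Fin n) (t : ℤ) :
    z i j d t ≤ ∑ u ∈ Ico d (D + 1), x i u (t + d - u) :=
  calc z i j d t ≤ ∑ j', z i j' d (t + d - d) := by
        simpa using single_le_sum (fun j' _ => hfeas.2.1 i j' d t) (mem_univ j)
    _ ≤ ∑ u ∈ Ico d (D + 1), ∑ j', z i j' u (t + d - u) :=
        single_le_sum (f := fun u => ∑ j', z i j' u (t + d - u))
          (fun u _ => sum_nonneg fun j' _ => hfeas.2.1 _ _ _ _) (mem_Ico.2 ⟨le_rfl, by omega⟩)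
    _ ≤ _ := migration_constraint_iff_tail.1 hfeas.2.2.2.1 i d hd (t + d)

lemma GLBFeasible.reroute (hfeas : GLBFeasible n T D L M x z) (hd : d ≤ D) (i j : Fin n)
    (t : ℤ) :
    GLBFeasible n T D L M (x + transfer i j (reroutedAssignment x i (t + d) d (z i j d t)))
      (z - singleMigration i j d t (z i j d t)) := by
  have hδ := sum_range_reroutedAssignment (hfeas.2.1 i j d t) (hfeas.migration_le_sum_Ico hd i j t)
  obtain ⟨hx, hz, hdem, hmig, hcap⟩ := hfeas
  refine ⟨fun i' u r => ?_, fun i' j' u r => ?_, fun t₀ h₁ h₂ => ?_,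
    migration_constraint_iff_tail.2
      (reroute_migration_tail_le hx hz (migration_constraint_iff_tail.1 hmig) hd),
    fun i' s => ?_⟩
  · have hle := reroutedAssignment_le (i := i) (s := t + d) (d := d) (Z := z i j d t) hx u r
    have h0 := reroutedAssignment_nonneg (i := i) (s := t + d) (d := d) (Z := z i j d t) hx u r
    simp only [Pi.add_apply, transfer_apply]
    split_ifs <;> subst_vars <;> linarith [hx i' u r]
  · simp only [Pi.sub_apply, singleMigration]
    split_ifs with h
    · obtain ⟨rfl, rfl, rfl, rfl⟩ := h
      simp
    · simpa using hz i' j' u r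
  · simp only [Pi.add_apply, sum_add_distrib, sum_transfer, sum_sub_distrib, sum_ite_eq',
      mem_univ, ↓reduceIte, sub_self, add_zero]
    exact hdem t₀ h₁ h₂
  · rw [execLoad_transfer_sub_singleMigration hd hδ]
    exact hcap i' s

lemma GLBFeasible.exists_feasible_GLBObj_eq_sub (hfeas : GLBFeasible n T D L M x z)
    (hd : d ≤ D) (i j : Fin n) (ht : t ∈ Icc (1 : ℤ) T) :
    ∃ x' z', GLBFeasible n T D L M x' z' ∧ ∀ (C : Fin n → ℤ → ℝ → ℝ) (b : Fin n → Fin n → ℝ),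
      GLBObj n T D C b x' z' = GLBObj n T D C b x z - b i j * z i j d t :=
  ⟨_, _, hfeas.reroute hd i j t, GLBObj_transfer_sub_singleMigration hd ht
    (sum_range_reroutedAssignment (hfeas.2.1 i j d t) (hfeas.migration_le_sum_Ico hd i j t))⟩

end Reroute

theorem stmt_0_general (n T D : ℕ) (L : ℤ → ℝ) (M : Fin n → ℝ)
    (C : Fin n → ℤ → ℝ → ℝ)
    (b : Fin n → Fin n → ℝ) (hb : ∀ i j, 0 < b i j)
    (x : Fin n → ℕ → ℤ → ℝ) (z : Fin n → Fin n → ℕ → ℤ → ℝ)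
    (hfeas : GLBFeasible n T D L M x z)
    (hopt : ∀ x' z', GLBFeasible n T D L M x' z' →
      GLBObj n T D C b x z ≤ GLBObj n T D C b x' z') :
    ∀ (i j : Fin n) (d : ℕ), d ≤ D → ∀ t : ℤ, 1 ≤ t → t ≤ T →
      z i j d t = 0 := by
  intro i j d hd t ht₁ ht₂
  obtain ⟨x', z', hfeas', hobj⟩ :=
    hfeas.exists_feasible_GLBObj_eq_sub hd i j (mem_Icc.2 ⟨ht₁, ht₂⟩)
  have hcost : b i j * z i j d t ≤ 0 := by
    linarith [hopt x' z' hfeas', hobj C b]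
  exact le_antisymm (nonpos_of_mul_nonpos_right hcost (hb i j)) (hfeas.2.1 i j d t)

/-- in any optimal solution of the geographical load balancing
LP with strictly positive migration cost coefficients `b_{i,j} > 0`, all
migration variables are zero (Lemma 1 of the paper). -/
theorem stmt_0 (n T D : ℕ) (L : ℤ → ℝ) (M : Fin n → ℝ)
    (C : Fin n → ℤ → ℝ → ℝ)
    (hC0 : ∀ i t y, 0 ≤ C i t y)
    (hCconv : ∀ i t, ConvexOn ℝ Set.univ (C i t))
    (hCmono : ∀ i t, Monotone (C i t))
    (b : Fin n → Fin n → ℝ) (hb : ∀ i j, 0 < b i j)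
    (x : Fin n → ℕ → ℤ → ℝ) (z : Fin n → Fin n → ℕ → ℤ → ℝ)
    (hfeas : GLBFeasible n T D L M x z)
    (hopt : ∀ x' z', GLBFeasible n T D L M x' z' →
      GLBObj n T D C b x z ≤ GLBObj n T D C b x' z') :
    ∀ (i j : Fin n) (d : ℕ), d ≤ D → ∀ t : ℤ, 1 ≤ t → t ≤ T →
      z i j d t = 0 :=
  stmt_0_general n T D L M C b hb x z hfeas hopt
end

section
/- There exists an optimal solution of the geographical load balancing linear program in which all migration variables z_{i,j,d,t} are identically zero, regardless of whether the migration cost coefficients b_{i,j} are positive or zero. -/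
open Finset

/- ### Auxiliary constructions -/

/-- In-migration from `i` to `j` executed at time `s`. -/
noncomputable def wIn (n D : ℕ) (z : Fin n → Fin n → ℕ → ℤ → ℝ)
    (i j : Fin n) (s : ℤ) : ℝ :=
  ∑ d ∈ Finset.range (D + 1), z i j d (s - d)

/-- Total out-migration from `i` executed at time `s`. -/
noncomputable def outS (n D : ℕ) (z : Fin n → Fin n → ℕ → ℤ → ℝ)
    (i : Fin n) (s : ℤ) : ℝ :=
  ∑ j : Fin n, wIn n D z i j s

/-- Suffix sum of assigned workload at `i` executing at time `s`, deadlines `≥ d`. -/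
noncomputable def suffA (n D : ℕ) (x : Fin n → ℕ → ℤ → ℝ)
    (i : Fin n) (s : ℤ) (d : ℕ) : ℝ :=
  ∑ m ∈ Finset.Icc d D, x i m (s - m)

/-- Amount removed from `x i d t` (water-filling along the anti-diagonal). -/
noncomputable def outO (n D : ℕ) (x : Fin n → ℕ → ℤ → ℝ)
    (z : Fin n → Fin n → ℕ → ℤ → ℝ) (i : Fin n) (d : ℕ) (t : ℤ) : ℝ :=
  min (suffA n D x i (t + d) d) (outS n D z i (t + d))
    - min (suffA n D x i (t + d) (d + 1)) (outS n D z i (t + d))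

/-- Fraction of out-migration from `i` executed at `s` that goes to `j`. -/
noncomputable def qFrac (n D : ℕ) (z : Fin n → Fin n → ℕ → ℤ → ℝ)
    (i j : Fin n) (s : ℤ) : ℝ :=
  if outS n D z i s = 0 then 0 else wIn n D z i j s / outS n D z i s

/-- Amount added to `x j d t` from in-migration. -/
noncomputable def rIn (n D : ℕ) (x : Fin n → ℕ → ℤ → ℝ)
    (z : Fin n → Fin n → ℕ → ℤ → ℝ) (j : Fin n) (d : ℕ) (t : ℤ) : ℝ :=
  ∑ i : Fin n, outO n D x z i d t * qFrac n D z i j (t + d)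

/-- The migration-free assignment. -/
noncomputable def newX (n D : ℕ) (x : Fin n → ℕ → ℤ → ℝ)
    (z : Fin n → Fin n → ℕ → ℤ → ℝ) (i : Fin n) (d : ℕ) (t : ℤ) : ℝ :=
  x i d t - outO n D x z i d t + rIn n D x z i d t

lemma min_sub_min_le {a b c : ℝ} (h : b ≤ a) : min a c - min b c ≤ a - b := by
  rcases le_total c b with hc | hc
  · rw [min_eq_right (hc.trans h), min_eq_right hc]; linarith
  · rw [min_eq_left hc]
    have := min_le_left a c
    linarith

section facts

variable {n T D : ℕ} {L : ℤ → ℝ} {M : Fin n → ℝ}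
  {x : Fin n → ℕ → ℤ → ℝ} {z : Fin n → Fin n → ℕ → ℤ → ℝ}

lemma wIn_nonneg (hz : ∀ i j d t, 0 ≤ z i j d t) (i j : Fin n) (s : ℤ) :
    0 ≤ wIn n D z i j s :=
  Finset.sum_nonneg fun _ _ => hz _ _ _ _

lemma outS_nonneg (hz : ∀ i j d t, 0 ≤ z i j d t) (i : Fin n) (s : ℤ) :
    0 ≤ outS n D z i s :=
  Finset.sum_nonneg fun _ _ => wIn_nonneg hz _ _ _

lemma wIn_le_outS (hz : ∀ i j d t, 0 ≤ z i j d t) (i j : Fin n) (s : ℤ) :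
    wIn n D z i j s ≤ outS n D z i s :=
  Finset.single_le_sum (fun j' _ => wIn_nonneg hz i j' s) (Finset.mem_univ j)

lemma suffA_nonneg (hx : ∀ i d t, 0 ≤ x i d t) (i : Fin n) (s : ℤ) (d : ℕ) :
    0 ≤ suffA n D x i s d :=
  Finset.sum_nonneg fun _ _ => hx _ _ _

lemma suffA_succ_le (hx : ∀ i d t, 0 ≤ x i d t) (i : Fin n) (s : ℤ) (d : ℕ) :
    suffA n D x i s (d + 1) ≤ suffA n D x i s d :=
  Finset.sum_le_sum_of_subset_of_nonneg
    (Finset.Icc_subset_Icc_left (Nat.le_succ d)) (fun _ _ _ => hx _ _ _)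

lemma suffA_succ (i : Fin n) (s : ℤ) {d : ℕ} (hd : d ≤ D) :
    suffA n D x i s d = x i d (s - d) + suffA n D x i s (d + 1) := by
  unfold suffA
  rw [Finset.Icc_eq_cons_Ioc hd, Finset.sum_cons, ← Finset.Icc_add_one_left_eq_Ioc]

lemma suffA_top (i : Fin n) (s : ℤ) {d : ℕ} (hd : D < d) :
    suffA n D x i s d = 0 := by
  unfold suffA
  rw [Finset.Icc_eq_empty (by omega), Finset.sum_empty]

lemma range_succ_eq_Icc : Finset.range (D + 1) = Finset.Icc 0 D := by
  rw [Finset.range_eq_Ico, Finset.Ico_add_one_right_eq_Icc]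

/-- Constraint (2c) at `d = 0`: total out-migration executed at time `s`
is at most the total assignment executed at time `s`. -/
lemma outS_le_suffA
    (hmig : ∀ i : Fin n, ∀ d ∈ Finset.range (D + 1), ∀ t : ℤ,
      ∑ k ∈ Finset.range (D - d + 1), ∑ j : Fin n, z i j (d + k) (t - k)
        ≤ ∑ k ∈ Finset.range (D - d + 1), x i (d + k) (t - k))
    (i : Fin n) (s : ℤ) :
    outS n D z i s ≤ suffA n D x i s 0 := by
  have h := hmig i 0 (by simp) s
  simp only [Nat.sub_zero, Nat.zero_add, zero_add] at h
  calc outS n D z i s = ∑ k ∈ Finset.range (D + 1), ∑ j : Fin n, z i j k (s - k) := by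
        unfold outS wIn; rw [Finset.sum_comm]
    _ ≤ ∑ k ∈ Finset.range (D + 1), x i k (s - k) := h
    _ = suffA n D x i s 0 := by
        unfold suffA; rw [range_succ_eq_Icc]


lemma outO_nonneg (hx : ∀ i d t, 0 ≤ x i d t) (i : Fin n) (d : ℕ) (t : ℤ) :
    0 ≤ outO n D x z i d t := by
  unfold outO
  have := min_le_min_right (outS n D z i (t + d)) (suffA_succ_le (D := D) hx i (t + d) d)
  linarith

lemma outO_le_x (hx : ∀ i d t, 0 ≤ x i d t) (i : Fin n) (d : ℕ) (t : ℤ) :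
    outO n D x z i d t ≤ x i d t := by
  unfold outO
  rcases le_or_gt d D with hd | hd
  · have h1 := suffA_succ (D := D) (x := x) i (t + d) hd
    have h2 : (t + (d : ℤ)) - d = t := by ring
    rw [h2] at h1
    have h3 := min_sub_min_le (c := outS n D z i (t + d))
      (suffA_succ_le (D := D) hx i (t + d) d)
    linarith
  · rw [suffA_top i _ hd, suffA_top i _ (by omega)]
    simpa using hx i d t

lemma outO_le_outS (hx : ∀ i d t, 0 ≤ x i d t) (hz : ∀ i j d t, 0 ≤ z i j d t)
    (i : Fin n) (d : ℕ) (t : ℤ) :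
    outO n D x z i d t ≤ outS n D z i (t + d) := by
  unfold outO
  have h1 := min_le_right (suffA n D x i (t + d) d) (outS n D z i (t + d))
  have h2 : (0:ℝ) ≤ min (suffA n D x i (t + d) (d + 1)) (outS n D z i (t + d)) :=
    le_min (suffA_nonneg hx _ _ _) (outS_nonneg hz _ _)
  linarith

lemma outO_zero_of_S (hx : ∀ i d t, 0 ≤ x i d t) (hz : ∀ i j d t, 0 ≤ z i j d t)
    {i : Fin n} {d : ℕ} {t : ℤ} (hS : outS n D z i (t + d) = 0) :
    outO n D x z i d t = 0 :=
  le_antisymm (hS ▸ outO_le_outS hx hz i d t) (outO_nonneg hx i d t)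

lemma sum_outO (hx : ∀ i d t, 0 ≤ x i d t) (hz : ∀ i j d t, 0 ≤ z i j d t)
    (hmig : ∀ i : Fin n, ∀ d ∈ Finset.range (D + 1), ∀ t : ℤ,
      ∑ k ∈ Finset.range (D - d + 1), ∑ j : Fin n, z i j (d + k) (t - k)
        ≤ ∑ k ∈ Finset.range (D - d + 1), x i (d + k) (t - k))
    (i : Fin n) (s : ℤ) :
    ∑ d ∈ Finset.range (D + 1), outO n D x z i d (s - d) = outS n D z i s := by
  have h1 : ∀ d ∈ Finset.range (D + 1), outO n D x z i d (s - d)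
      = min (suffA n D x i s d) (outS n D z i s)
        - min (suffA n D x i s (d + 1)) (outS n D z i s) := by
    intro d _
    unfold outO
    rw [show (s - (d : ℤ)) + d = s by ring]
  rw [Finset.sum_congr rfl h1,
    Finset.sum_range_sub' (fun d => min (suffA n D x i s d) (outS n D z i s)) (D + 1)]
  rw [suffA_top i s (Nat.lt_succ_self D), min_eq_left (outS_nonneg hz i s),
    min_eq_right (outS_le_suffA hmig i s)]
  ring

lemma qFrac_nonneg (hz : ∀ i j d t, 0 ≤ z i j d t) (i j : Fin n) (s : ℤ) :
    0 ≤ qFrac n D z i j s := by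
  unfold qFrac
  split
  · exact le_rfl
  · exact div_nonneg (wIn_nonneg hz i j s) (outS_nonneg hz i s)

lemma sum_qFrac (i : Fin n) (s : ℤ) :
    ∑ j : Fin n, qFrac n D z i j s = if outS n D z i s = 0 then 0 else 1 := by
  by_cases h : outS n D z i s = 0
  · simp [qFrac, h]
  · simp only [qFrac, if_neg h]
    rw [← Finset.sum_div]
    exact div_self h

lemma rIn_nonneg (hx : ∀ i d t, 0 ≤ x i d t) (hz : ∀ i j d t, 0 ≤ z i j d t)
    (j : Fin n) (d : ℕ) (t : ℤ) :
    0 ≤ rIn n D x z j d t :=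
  Finset.sum_nonneg fun i _ =>
    mul_nonneg (outO_nonneg hx i d t) (qFrac_nonneg hz i j (t + d))

lemma sum_j_rIn (hx : ∀ i d t, 0 ≤ x i d t) (hz : ∀ i j d t, 0 ≤ z i j d t)
    (d : ℕ) (t : ℤ) :
    ∑ j : Fin n, rIn n D x z j d t = ∑ i : Fin n, outO n D x z i d t := by
  unfold rIn
  rw [Finset.sum_comm]
  refine Finset.sum_congr rfl fun i _ => ?_
  rw [← Finset.mul_sum, sum_qFrac i (t + d)]
  by_cases h : outS n D z i (t + d) = 0
  · simp [h, outO_zero_of_S hx hz h]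
  · simp [h]

lemma sum_d_rIn (hx : ∀ i d t, 0 ≤ x i d t) (hz : ∀ i j d t, 0 ≤ z i j d t)
    (hmig : ∀ i : Fin n, ∀ d ∈ Finset.range (D + 1), ∀ t : ℤ,
      ∑ k ∈ Finset.range (D - d + 1), ∑ j : Fin n, z i j (d + k) (t - k)
        ≤ ∑ k ∈ Finset.range (D - d + 1), x i (d + k) (t - k))
    (j : Fin n) (s : ℤ) :
    ∑ d ∈ Finset.range (D + 1), rIn n D x z j d (s - d)
      = ∑ i : Fin n, wIn n D z i j s := by
  unfold rIn
  rw [Finset.sum_comm]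
  refine Finset.sum_congr rfl fun i _ => ?_
  have h1 : ∀ d ∈ Finset.range (D + 1),
      outO n D x z i d (s - d) * qFrac n D z i j ((s - d) + d)
        = outO n D x z i d (s - d) * qFrac n D z i j s := by
    intro d _
    rw [show (s - (d : ℤ)) + d = s by ring]
  rw [Finset.sum_congr rfl h1, ← Finset.sum_mul, sum_outO hx hz hmig i s]
  by_cases h : outS n D z i s = 0
  · have hw : wIn n D z i j s = 0 :=
      le_antisymm (h ▸ wIn_le_outS hz i j s) (wIn_nonneg hz i j s)
    simp [h, hw]
  · unfold qFrac
    rw [if_neg h, mul_comm, div_mul_cancel₀ _ h]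

lemma execLoad_newX (hx : ∀ i d t, 0 ≤ x i d t) (hz : ∀ i j d t, 0 ≤ z i j d t)
    (hmig : ∀ i : Fin n, ∀ d ∈ Finset.range (D + 1), ∀ t : ℤ,
      ∑ k ∈ Finset.range (D - d + 1), ∑ j : Fin n, z i j (d + k) (t - k)
        ≤ ∑ k ∈ Finset.range (D - d + 1), x i (d + k) (t - k))
    (j : Fin n) (s : ℤ) :
    execLoad n D (newX n D x z) (fun _ _ _ _ => 0) j s = execLoad n D x z j s := by
  unfold execLoad newX
  simp only [Finset.sum_const_zero, add_zero, sub_zero]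
  rw [Finset.sum_add_distrib, Finset.sum_sub_distrib,
    sum_outO hx hz hmig j s, sum_d_rIn hx hz hmig j s]
  have h2 : ∑ i : Fin n, ∑ d ∈ Finset.range (D + 1), z i j d (s - d)
      = ∑ i : Fin n, wIn n D z i j s := rfl
  have h3 : ∑ i : Fin n, ∑ d ∈ Finset.range (D + 1), z j i d (s - d)
      = outS n D z j s := rfl
  rw [h2, h3]
  ring

end facts

/-- there exists an optimal solution of the geographical load
balancing LP in which all migration variables are identically zero,
regardless of whether the migration cost coefficients `b_{i,j}` are positive
or zero (Corollary 2 of the paper; it is assumed that an optimal solution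
exists). -/
theorem stmt_1 (n T D : ℕ) (L : ℤ → ℝ) (M : Fin n → ℝ)
    (C : Fin n → ℤ → ℝ → ℝ)
    (hC0 : ∀ i t y, 0 ≤ C i t y)
    (hCconv : ∀ i t, ConvexOn ℝ Set.univ (C i t))
    (hCmono : ∀ i t, Monotone (C i t))
    (b : Fin n → Fin n → ℝ) (hb : ∀ i j, 0 ≤ b i j)
    (hex : ∃ x z, GLBFeasible n T D L M x z ∧
      ∀ x' z', GLBFeasible n T D L M x' z' →
        GLBObj n T D C b x z ≤ GLBObj n T D C b x' z') :
    ∃ x z, GLBFeasible n T D L M x z ∧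
      (∀ x' z', GLBFeasible n T D L M x' z' →
        GLBObj n T D C b x z ≤ GLBObj n T D C b x' z') ∧
      ∀ (i j : Fin n) (d : ℕ) (t : ℤ), z i j d t = 0 := by
  obtain ⟨x, z, ⟨hx, hz, hbal, hmig, hcap⟩, hopt⟩ := hex
  have hnn : ∀ i d t, 0 ≤ newX n D x z i d t := by
    intro i d t
    unfold newX
    have h1 := outO_le_x (D := D) (z := z) hx i d t
    have h2 := rIn_nonneg (D := D) hx hz i d t
    linarith
  refine ⟨newX n D x z, fun _ _ _ _ => 0, ⟨hnn, fun _ _ _ _ => le_refl 0, ?_, ?_, ?_⟩,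
    ?_, fun _ _ _ _ => rfl⟩
  · -- balance
    intro t ht1 ht2
    have hdist : ∀ i : Fin n, ∑ d ∈ Finset.range (D + 1), newX n D x z i d t
        = (∑ d ∈ Finset.range (D + 1), x i d t)
          - (∑ d ∈ Finset.range (D + 1), outO n D x z i d t)
          + ∑ d ∈ Finset.range (D + 1), rIn n D x z i d t := by
      intro i
      unfold newX
      rw [Finset.sum_add_distrib, Finset.sum_sub_distrib]
    rw [Finset.sum_congr rfl fun i _ => hdist i, Finset.sum_add_distrib,
      Finset.sum_sub_distrib, hbal t ht1 ht2]
    have hswap : ∑ i : Fin n, ∑ d ∈ Finset.range (D + 1), rIn n D x z i d t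
        = ∑ i : Fin n, ∑ d ∈ Finset.range (D + 1), outO n D x z i d t :=
      calc ∑ i : Fin n, ∑ d ∈ Finset.range (D + 1), rIn n D x z i d t
          = ∑ d ∈ Finset.range (D + 1), ∑ i : Fin n, rIn n D x z i d t :=
            Finset.sum_comm
        _ = ∑ d ∈ Finset.range (D + 1), ∑ i : Fin n, outO n D x z i d t :=
            Finset.sum_congr rfl fun d _ => sum_j_rIn hx hz d t
        _ = ∑ i : Fin n, ∑ d ∈ Finset.range (D + 1), outO n D x z i d t :=
            Finset.sum_comm
    rw [hswap]
    ring
  · -- migration constraint (trivial with z' = 0)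
    intro i d _ t
    simp only [Finset.sum_const_zero]
    exact Finset.sum_nonneg fun k _ => hnn i (d + k) (t - k)
  · -- capacity
    intro i t
    rw [execLoad_newX hx hz hmig i t]
    exact hcap i t
  · -- optimality
    intro x' z' hf
    have key : GLBObj n T D C b (newX n D x z) (fun _ _ _ _ => 0)
        ≤ GLBObj n T D C b x z := by
      unfold GLBObj
      refine Finset.sum_le_sum fun t _ => ?_
      have hC : ∑ i : Fin n, C i t (execLoad n D (newX n D x z) (fun _ _ _ _ => 0) i t)
          = ∑ i : Fin n, C i t (execLoad n D x z i t) :=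
        Finset.sum_congr rfl fun i _ => by rw [execLoad_newX hx hz hmig i t]
      rw [hC]
      have hmigcost : (0:ℝ) ≤ ∑ i : Fin n, ∑ j : Fin n,
          b i j * ∑ d ∈ Finset.range (D + 1), z i j d t :=
        Finset.sum_nonneg fun i _ => Finset.sum_nonneg fun j _ =>
          mul_nonneg (hb i j) (Finset.sum_nonneg fun d _ => hz i j d t)
      simp only [Finset.sum_const_zero, mul_zero, add_zero]
      linarith
    exact key.trans (hopt x' z' hf)
end

section
/- If for every time slot s in a window the prefix sums satisfy Σ_{r≤s} w_r ≥ Σ_{r≤s} u_r and the totals are equal (Σ_r w_r = Σ_r u_r), with u_r, w_r ≥ 0, then there exists a nonnegative matrix (transport plan) T = (T_{r,s}) with T_{r,s} = 0 whenever r > s, Σ_r T_{r,s} = u_s for each s, and Σ_s T_{r,s} = w_r for each r; i.e., w can be obtained from u by moving workload only to earlier or equal slots. -/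
open Finset

private lemma min_supermod (a a' b b' : ℝ) (ha : a ≤ a') (hb : b ≤ b') :
    0 ≤ min a' b' - min a' b - min a b' + min a b := by
  rcases le_total a b with h1 | h1 <;> rcases le_total a' b' with h2 | h2 <;>
    rcases le_total a' b with h3 | h3 <;> rcases le_total a b' with h4 | h4 <;>
    simp [min_def, h1, h2, h3, h4] <;> linarith

/-- If the prefix sums of `w` dominate those of `u`
(`∑_{r≤s} w_r ≥ ∑_{r≤s} u_r` for every slot `s`) and the totals are equal,
with `u, w ≥ 0`, then there is a nonnegative transport plan `T` supported on
`{(r,s) : r ≤ s}` whose column sums are `u` and whose row sums are `w`;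
i.e. `w` is obtained from `u` by moving workload only to earlier or equal
slots. -/
theorem stmt_9 (m : ℕ) (u w : Fin m → ℝ)
    (hu : ∀ r, 0 ≤ u r) (hw : ∀ r, 0 ≤ w r)
    (hpre : ∀ s : Fin m, ∑ r ∈ Finset.Iic s, u r ≤ ∑ r ∈ Finset.Iic s, w r)
    (htot : ∑ r, w r = ∑ r, u r) :
    ∃ T : Fin m → Fin m → ℝ,
      (∀ r s, 0 ≤ T r s) ∧
      (∀ r s : Fin m, s < r → T r s = 0) ∧
      (∀ s, ∑ r, T r s = u s) ∧
      (∀ r, ∑ s, T r s = w r) := by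
  classical
  set un : ℕ → ℝ := fun i => if h : i < m then u ⟨i, h⟩ else 0 with hun
  set wn : ℕ → ℝ := fun i => if h : i < m then w ⟨i, h⟩ else 0 with hwn
  have hun0 : ∀ i, 0 ≤ un i := by
    intro i; simp only [hun]; split <;> simp [hu]
  have hwn0 : ∀ i, 0 ≤ wn i := by
    intro i; simp only [hwn]; split <;> simp [hw]
  set A : ℕ → ℝ := fun n => ∑ i ∈ Finset.range n, wn i with hA
  set B : ℕ → ℝ := fun n => ∑ i ∈ Finset.range n, un i with hB
  have hAmono : Monotone A := by
    intro a b hab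
    exact Finset.sum_le_sum_of_subset_of_nonneg (Finset.range_subset_range.2 hab)
      (fun i _ _ => hwn0 i)
  have hBmono : Monotone B := by
    intro a b hab
    exact Finset.sum_le_sum_of_subset_of_nonneg (Finset.range_subset_range.2 hab)
      (fun i _ _ => hun0 i)
  have key : ∀ (f : Fin m → ℝ) (s : Fin m),
      ∑ r ∈ Finset.Iic s, f r
        = ∑ i ∈ Finset.range (s.val+1), (if h : i < m then f ⟨i,h⟩ else 0) := by
    intro f s
    have : Finset.range (s.val+1) = Finset.Iic (s.val) := by
      ext i; simp [Nat.lt_succ_iff]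
    rw [this, ← Fin.map_valEmbedding_Iic, Finset.sum_map]
    exact Finset.sum_congr rfl fun r _ => by simp [r.isLt]
  have hAm : A m = ∑ r, w r := by
    show ∑ i ∈ Finset.range m, wn i = _
    rw [← Fin.sum_univ_eq_sum_range]
    exact Finset.sum_congr rfl fun i _ => by simp [hwn, i.isLt]
  have hBm : B m = ∑ r, u r := by
    show ∑ i ∈ Finset.range m, un i = _
    rw [← Fin.sum_univ_eq_sum_range]
    exact Finset.sum_congr rfl fun i _ => by simp [hun, i.isLt]
  have hABm : A m = B m := by rw [hAm, hBm, htot]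
  have hAB : ∀ n, B n ≤ A n := by
    intro n
    rcases le_or_gt m n with hn | hn
    · have h1 : B n = B m := by
        show ∑ i ∈ Finset.range n, un i = ∑ i ∈ Finset.range m, un i
        refine (Finset.sum_subset (Finset.range_subset_range.2 hn) ?_).symm
        intro i _ hi
        simp only [Finset.mem_range, not_lt] at hi
        simp [hun, Nat.not_lt.2 hi]
      have h2 : A n = A m := by
        show ∑ i ∈ Finset.range n, wn i = ∑ i ∈ Finset.range m, wn i
        refine (Finset.sum_subset (Finset.range_subset_range.2 hn) ?_).symm
        intro i _ hi
        simp only [Finset.mem_range, not_lt] at hi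
        simp [hwn, Nat.not_lt.2 hi]
      rw [h1, h2, hABm]
    · rcases Nat.eq_zero_or_pos n with rfl | hpos
      · simp [hA, hB]
      · set s : Fin m := ⟨n - 1, by omega⟩ with hs
        have hsn : s.val + 1 = n := by simp [hs]; omega
        have := hpre s
        rw [key u s, key w s, hsn] at this
        exact this
  have hA0 : A 0 = 0 := by simp [hA]
  have hB0 : B 0 = 0 := by simp [hB]
  have hAnn : ∀ n, 0 ≤ A n := fun n => hA0 ▸ hAmono (Nat.zero_le n)
  have hBnn : ∀ n, 0 ≤ B n := fun n => hB0 ▸ hBmono (Nat.zero_le n)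
  have hBstep : ∀ s : Fin m, B (s.val+1) - B s.val = u s := by
    intro s
    show (∑ i ∈ Finset.range (s.val+1), un i) - ∑ i ∈ Finset.range s.val, un i = u s
    rw [Finset.sum_range_succ]
    simp [hun, s.isLt]
  have hAstep : ∀ r : Fin m, A (r.val+1) - A r.val = w r := by
    intro r
    show (∑ i ∈ Finset.range (r.val+1), wn i) - ∑ i ∈ Finset.range r.val, wn i = w r
    rw [Finset.sum_range_succ]
    simp [hwn, r.isLt]
  refine ⟨fun r s => min (A (r.val+1)) (B (s.val+1)) - min (A (r.val+1)) (B s.val)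
      - min (A r.val) (B (s.val+1)) + min (A r.val) (B s.val), ?_, ?_, ?_, ?_⟩
  · intro r s
    dsimp only
    exact min_supermod (A r.val) (A (r.val+1)) (B s.val) (B (s.val+1))
      (hAmono (Nat.le_succ _)) (hBmono (Nat.le_succ _))
  · intro r s hrs
    dsimp only
    have h1 : B (s.val+1) ≤ A r.val := by
      calc B (s.val+1) ≤ A (s.val+1) := hAB _
        _ ≤ A r.val := hAmono (by exact_mod_cast hrs)
    have h0 : B s.val ≤ B (s.val+1) := hBmono (Nat.le_succ _)
    have h2 : A r.val ≤ A (r.val+1) := hAmono (Nat.le_succ _)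
    rw [min_eq_right (by linarith), min_eq_right (by linarith),
      min_eq_right h1, min_eq_right (by linarith)]
    ring
  · intro s
    dsimp only
    have tele : ∀ F : ℕ → ℝ,
        ∑ r : Fin m, (F (r.val+1) - F r.val) = F m - F 0 := by
      intro F
      rw [Fin.sum_univ_eq_sum_range (fun i => F (i+1) - F i) m, Finset.sum_range_sub]
    have ht := tele (fun a => min (A a) (B (s.val+1)) - min (A a) (B s.val))
    have e1 : ∑ r : Fin m,
        (min (A (r.val+1)) (B (s.val+1)) - min (A (r.val+1)) (B s.val)
          - min (A r.val) (B (s.val+1)) + min (A r.val) (B s.val))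
        = ∑ r : Fin m, ((fun a => min (A a) (B (s.val+1)) - min (A a) (B s.val)) (r.val+1)
            - (fun a => min (A a) (B (s.val+1)) - min (A a) (B s.val)) r.val) := by
      apply Finset.sum_congr rfl; intro r _; dsimp only; ring
    rw [e1, ht]
    have hb1 : B (s.val+1) ≤ A m := hABm ▸ hBmono (by omega : s.val+1 ≤ m)
    have hb0 : B s.val ≤ A m := hABm ▸ hBmono (by omega : s.val ≤ m)
    rw [hA0, min_eq_right hb1, min_eq_right hb0,
      min_eq_left (hBnn _), min_eq_left (hBnn _)]
    have := hBstep s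
    linarith
  · intro r
    dsimp only
    have tele : ∀ F : ℕ → ℝ,
        ∑ s : Fin m, (F (s.val+1) - F s.val) = F m - F 0 := by
      intro F
      rw [Fin.sum_univ_eq_sum_range (fun i => F (i+1) - F i) m, Finset.sum_range_sub]
    have ht := tele (fun b => min (A (r.val+1)) (B b) - min (A r.val) (B b))
    have e1 : ∑ s : Fin m,
        (min (A (r.val+1)) (B (s.val+1)) - min (A (r.val+1)) (B s.val)
          - min (A r.val) (B (s.val+1)) + min (A r.val) (B s.val))
        = ∑ s : Fin m, ((fun b => min (A (r.val+1)) (B b) - min (A r.val) (B b)) (s.val+1)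
            - (fun b => min (A (r.val+1)) (B b) - min (A r.val) (B b)) s.val) := by
      apply Finset.sum_congr rfl; intro s _; dsimp only; ring
    rw [e1, ht]
    have ha1 : A (r.val+1) ≤ B m := hABm ▸ hAmono (by omega : r.val+1 ≤ m)
    have ha0 : A r.val ≤ B m := hABm ▸ hAmono (by omega : r.val ≤ m)
    rw [hB0, min_eq_left ha1, min_eq_left ha0,
      min_eq_right (hAnn _), min_eq_right (hAnn _)]
    have := hAstep r
    linarith
end
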